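/- Let Ω ⊂ ℤ_p be a Borel set of positive Haar measure and T ⊂ ℤ_p a finite set with at least two elements such that (Ω, T) is a tiling pair of ℤ_p, and let γ_T := max_{t≠t′∈T} (−log_p |t − t′|_p). Then the Fourier transform of the indicator of Ω vanishes at high frequencies: 1̂_Ω(ξ) = 0 for all ξ ∈ ℚ_p with |ξ|_p > p^{γ_T + 1}. -/

import Mathlib

open MeasureTheory Complex

noncomputable section

namespace PadicTiling

variable (p : ℕ) [hp : Fact p.Prime]

instance : MeasurableSpace ℚ_[p] := borel _
instance : BorelSpace ℚ_[p] := ⟨rfl⟩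

/-- The closed unit ball of `ℚ_[p]` (the set `ℤ_p`) as a positive compact set. -/
def unitBall : TopologicalSpace.PositiveCompacts ℚ_[p] where
  carrier := Metric.closedBall 0 1
  isCompact' := isCompact_closedBall 0 1
  interior_nonempty' := ⟨0, mem_interior_iff_mem_nhds.mpr (Metric.closedBall_mem_nhds 0 one_pos)⟩

/-- The Haar measure on `ℚ_[p]` normalized so that `ℤ_p` has measure `1`. -/
def mHaar : Measure ℚ_[p] := Measure.addHaarMeasure (unitBall p)

/-- `ℤ_p` as a subset of `ℚ_[p]`. -/
def Zp : Set ℚ_[p] := {x : ℚ_[p] | ‖x‖ ≤ 1}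

/-- The fractional part `{x}` of a `p`-adic number: the rational number
`∑_{n=v}^{-1} a_n p^n` given by the negative-power part of the digit expansion. -/
def padicFract (x : ℚ_[p]) : ℚ :=
  ((PadicInt.toZModPow ((-x.valuation).toNat)
      (⟨x * (p : ℚ_[p]) ^ ((-x.valuation).toNat), by
        rcases eq_or_ne x 0 with hx | hx
        · simp [hx]
        · have hp1 : (1 : ℝ) < p := Nat.one_lt_cast.mpr hp.out.one_lt
          rw [norm_mul, Padic.norm_eq_zpow_neg_valuation hx, Padic.norm_p_pow,
            ← zpow_add₀ (by positivity : (p : ℝ) ≠ 0)]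
          apply zpow_le_one_of_nonpos₀ (le_of_lt hp1) (by omega)
          ⟩ : ℤ_[p])).val : ℚ) / (p : ℚ) ^ ((-x.valuation).toNat)

/-- The standard additive character `χ(x) = e^{2πi {x}}` of `ℚ_[p]`. -/
def padicChar (x : ℚ_[p]) : ℂ :=
  Complex.exp (2 * Real.pi * Complex.I * (padicFract p x : ℂ))


/-- `γ_T := max_{t ≠ t' ∈ T} (-log_p |t - t'|_p)`, the largest valuation of a difference of
two distinct elements of `T`. -/
def gammaT (T : Finset ℤ_[p]) (hT : 1 < T.card) : ℤ :=
  letI := Classical.decEq ℤ_[p]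
  T.offDiag.sup'
    (Finset.card_pos.mp (by
      rw [Finset.offDiag_card]
      have h2 : 2 * T.card ≤ T.card * T.card := Nat.mul_le_mul_right _ hT
      omega))
    fun tt => ((tt.1 - tt.2 : ℤ_[p]) : ℚ_[p]).valuation

open Polynomial

/-! The character `ψ(x) = exp(-2πi{x})` (`padicCharInv`) of `ℚ_p` is trivial exactly on `ℤ_p`.
Integrating `ψ(ξx)` over `ℤ_p` against the tiling identity `∑_t 1_Ω(x - t) = 1` gives
`(∑_{t ∈ T} ψ(ξt)) · 1̂_Ω(ξ) = ∫_{ℤ_p} ψ(ξx)`, and the right side vanishes once `|ξ| > 1`.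
The numbers `ψ(ξt)` are `p^M`-th roots of unity; since the minimal polynomial of a primitive
`p^(M+1)`-th root of unity is `∑_{i<p} X^(i p^M)`, a vanishing sum of them contains, with every
term `z`, all the terms `ωz` with `ω^p = 1`. So some `t ≠ t'` have `ψ(ξt)^p = ψ(ξt')^p`, that is
`|pξ(t - t')| ≤ 1`, which is impossible when `|ξ| > p^(γ_T + 1)`. -/

theorem Zp_eq_subring : Zp p = PadicInt.subring p := rfl

theorem mem_Zp {x : ℚ_[p]} : x ∈ Zp p ↔ ‖x‖ ≤ 1 := Iff.rfl

theorem exists_eq_intCast_of_mul_pow_eq {r : ℚ} {n : ℕ} {a : ℤ} (ha : r * p ^ n = a)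
    (hr : (r : ℚ_[p]) ∈ Zp p) : ∃ m : ℤ, r = m := by
  have hp0 : (p : ℚ) ≠ 0 := Nat.cast_ne_zero.mpr hp.out.ne_zero
  obtain ⟨m, rfl⟩ : (p : ℤ) ^ n ∣ a := by
    rw [← Padic.norm_int_le_pow_iff_dvd, ← Rat.cast_intCast, ← ha]
    push_cast
    rw [norm_mul, Padic.norm_p_pow]
    exact mul_le_of_le_one_left (by positivity) hr
  refine ⟨m, mul_right_cancel₀ (pow_ne_zero n hp0) ?_⟩
  push_cast at ha
  linear_combination ha

theorem norm_sub_toZModPow_val_le (z : ℤ_[p]) (n : ℕ) :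
    ‖z - ((PadicInt.toZModPow n z).val : ℤ_[p])‖ ≤ (p : ℝ) ^ (-n : ℤ) := by
  rw [PadicInt.norm_le_pow_iff_mem_span_pow, ← PadicInt.ker_toZModPow, RingHom.mem_ker, map_sub,
    map_natCast, ZMod.natCast_zmod_val, sub_self]

theorem sub_padicFract_mem_Zp (x : ℚ_[p]) : x - padicFract p x ∈ Zp p := by
  unfold padicFract
  generalize_proofs hz
  have key := norm_sub_toZModPow_val_le p ⟨_, hz⟩ (-x.valuation).toNat
  generalize (PadicInt.toZModPow _ ⟨_, hz⟩).val = a at key ⊢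
  generalize (-x.valuation).toNat = n at hz key ⊢
  have hpn : (p : ℚ_[p]) ^ n ≠ 0 := pow_ne_zero _ (Nat.cast_ne_zero.mpr hp.out.ne_zero)
  rw [PadicInt.norm_def] at key
  push_cast at key ⊢
  rw [mem_Zp, show x - a / (p : ℚ_[p]) ^ n = (x * p ^ n - a) / p ^ n by field_simp, norm_div,
    Padic.norm_p_pow, div_le_one (zpow_pos (Nat.cast_pos.mpr hp.out.pos) _)]
  exact key

theorem exists_padicFract_mul_pow_eq (x : ℚ_[p]) : ∃ n a : ℕ, padicFract p x * p ^ n = a :=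
  ⟨_, _, div_mul_cancel₀ _ (pow_ne_zero _ (Nat.cast_ne_zero.mpr hp.out.ne_zero))⟩

theorem exists_intCast_eq_padicFract_iff (x : ℚ_[p]) :
    (∃ m : ℤ, padicFract p x = m) ↔ x ∈ Zp p := by
  have hfract := sub_padicFract_mem_Zp p x
  rw [Zp_eq_subring, SetLike.mem_coe] at hfract ⊢
  constructor
  · rintro ⟨m, hm⟩
    simpa [hm] using add_mem hfract (intCast_mem (PadicInt.subring p) m)
  · intro hx
    obtain ⟨n, a, ha⟩ := exists_padicFract_mul_pow_eq p x
    have hmem := sub_mem hx hfract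
    rw [sub_sub_cancel] at hmem
    exact exists_eq_intCast_of_mul_pow_eq p (a := a) (by exact_mod_cast ha) hmem

theorem exists_padicFract_add_eq (x y : ℚ_[p]) :
    ∃ m : ℤ, padicFract p (x + y) = padicFract p x + padicFract p y + m := by
  obtain ⟨k, a, ha⟩ := exists_padicFract_mul_pow_eq p (x + y)
  obtain ⟨l, b, hb⟩ := exists_padicFract_mul_pow_eq p x
  obtain ⟨n, c, hc⟩ := exists_padicFract_mul_pow_eq p y
  have hint : (padicFract p (x + y) - padicFract p x - padicFract p y) * p ^ (k + l + n)
      = ((a * p ^ (l + n) - b * p ^ (k + n) - c * p ^ (k + l) : ℤ) : ℚ) := by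
    push_cast
    simp only [pow_add]
    linear_combination p ^ l * p ^ n * ha - p ^ k * p ^ n * hb - p ^ k * p ^ l * hc
  have hmem : ((padicFract p (x + y) - padicFract p x - padicFract p y : ℚ) : ℚ_[p]) ∈ Zp p := by
    have hx := sub_padicFract_mem_Zp p x
    have hy := sub_padicFract_mem_Zp p y
    have hxy := sub_padicFract_mem_Zp p (x + y)
    rw [Zp_eq_subring, SetLike.mem_coe] at hx hy hxy ⊢
    convert sub_mem (add_mem hx hy) hxy using 1
    push_cast
    ring
  obtain ⟨m, hm⟩ := exists_eq_intCast_of_mul_pow_eq p hint hmem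
  exact ⟨m, by linarith⟩

theorem exp_neg_two_pi_I_mul_eq_one_iff (q : ℚ) :
    Complex.exp (-(2 * Real.pi * Complex.I * q)) = 1 ↔ ∃ m : ℤ, q = m := by
  have h2πi : 2 * Real.pi * Complex.I ≠ 0 := by simp [Real.pi_ne_zero]
  rw [Complex.exp_eq_one_iff]
  constructor
  · rintro ⟨n, hn⟩
    refine ⟨-n, ?_⟩
    have : (q : ℂ) = ((-n : ℤ) : ℂ) := mul_left_cancel₀ h2πi (by push_cast; linear_combination -hn)
    exact_mod_cast this
  · rintro ⟨m, rfl⟩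
    exact ⟨-m, by push_cast; ring⟩

def padicCharInv : AddChar ℚ_[p] ℂ where
  toFun x := Complex.exp (-(2 * Real.pi * Complex.I * (padicFract p x : ℂ)))
  map_zero_eq_one' := (exp_neg_two_pi_I_mul_eq_one_iff _).mpr
    ((exists_intCast_eq_padicFract_iff p 0).mpr (PadicInt.subring p).zero_mem)
  map_add_eq_mul' x y := by
    obtain ⟨m, hm⟩ := exists_padicFract_add_eq p x y
    rw [hm, ← Complex.exp_add, ← mul_one (Complex.exp (_ + _)),
      ← (exp_neg_two_pi_I_mul_eq_one_iff m).mpr ⟨m, rfl⟩, ← Complex.exp_add]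
    congr 1
    push_cast
    ring

theorem padicCharInv_eq_one_iff (x : ℚ_[p]) : padicCharInv p x = 1 ↔ x ∈ Zp p :=
  (exp_neg_two_pi_I_mul_eq_one_iff _).trans (exists_intCast_eq_padicFract_iff p x)

theorem continuous_padicCharInv : Continuous (padicCharInv p) := by
  refine ((IsLocallyConstant.iff_eventually_eq _).mpr fun x => ?_).continuous
  filter_upwards [Metric.closedBall_mem_nhds x one_pos] with y hy
  rw [Metric.mem_closedBall, dist_eq_norm] at hy
  rw [show y = x + (y - x) by abel, AddChar.map_add_eq_mul,
    (padicCharInv_eq_one_iff p _).mpr hy, mul_one]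

instance : (mHaar p).IsAddHaarMeasure := by
  unfold mHaar
  infer_instance

theorem isCompact_Zp : IsCompact (Zp p) := by
  convert isCompact_closedBall (0 : ℚ_[p]) 1
  ext
  simp [Zp]

theorem preimage_add_right_Zp {h : ℚ_[p]} (hh : h ∈ Zp p) : (· + h) ⁻¹' Zp p = Zp p :=
  Set.ext fun _ => (PadicInt.subring p).add_mem_cancel_right hh

theorem setIntegral_Zp_addChar_eq_zero (χ : AddChar ℚ_[p] ℂ) {h : ℚ_[p]} (hh : h ∈ Zp p)
    (hχh : χ h ≠ 1) : ∫ x in Zp p, χ x ∂mHaar p = 0 := by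
  have htrans := (measurePreserving_add_right (mHaar p) h).setIntegral_preimage_emb
    (measurableEmbedding_addRight h) χ (Zp p)
  simp only [preimage_add_right_Zp p hh, AddChar.map_add_eq_mul, integral_mul_const] at htrans
  by_contra hne
  exact hχh (mul_left_cancel₀ hne (htrans.trans (mul_one _).symm))

theorem setIntegral_Zp_indicator_preimage_sub (χ : AddChar ℚ_[p] ℂ) {Ω : Set ℚ_[p]}
    (hΩ : Ω ⊆ Zp p) (hmeas : MeasurableSet Ω) (t : ℤ_[p]) :
    ∫ x in Zp p, ((· - (t : ℚ_[p])) ⁻¹' Ω).indicator χ x ∂mHaar p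
      = χ t * ∫ x in Ω, χ x ∂mHaar p := by
  have hsub : (· - (t : ℚ_[p])) ⁻¹' Ω ⊆ Zp p := fun x hx => by
    rw [Zp_eq_subring, SetLike.mem_coe, ← sub_add_cancel x t]
    exact add_mem (hΩ hx) t.2
  rw [setIntegral_indicator (hmeas.preimage (measurable_sub_const _)), Set.inter_eq_right.mpr hsub,
    ← (measurePreserving_add_right (mHaar p) t).setIntegral_preimage_emb
      (measurableEmbedding_addRight _)]
  simp only [Set.preimage_preimage, add_sub_cancel_right, Set.preimage_id', AddChar.map_add_eq_mul,
    integral_mul_const]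
  ring

theorem sum_mul_setIntegral_eq_setIntegral_Zp (χ : AddChar ℚ_[p] ℂ) (hχ : Continuous χ)
    {Ω : Set ℚ_[p]} (hΩ : Ω ⊆ Zp p) (hmeas : MeasurableSet Ω) {T : Finset ℤ_[p]}
    (htile : ∀ᵐ x ∂ (mHaar p).restrict (Zp p),
      ∑ t ∈ T, Ω.indicator (fun _ => (1 : ℝ)) (x - (t : ℚ_[p])) = 1) :
    (∑ t ∈ T, χ t) * ∫ x in Ω, χ x ∂mHaar p = ∫ x in Zp p, χ x ∂mHaar p := by
  have hind : ∀ (t : ℤ_[p]) x, Ω.indicator (fun _ => (1 : ℝ)) (x - (t : ℚ_[p])) • χ x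
      = ((· - (t : ℚ_[p])) ⁻¹' Ω).indicator χ x := by
    intro t x
    by_cases hx : x - (t : ℚ_[p]) ∈ Ω <;> simp [hx]
  have hint : ∀ t : ℤ_[p], Integrable (((· - (t : ℚ_[p])) ⁻¹' Ω).indicator χ)
      ((mHaar p).restrict (Zp p)) := fun t =>
    (hχ.continuousOn.integrableOn_compact (isCompact_Zp p)).indicator
      (hmeas.preimage (measurable_sub_const _))
  calc (∑ t ∈ T, χ t) * ∫ x in Ω, χ x ∂mHaar p
      = ∑ t ∈ T, ∫ x in Zp p, ((· - (t : ℚ_[p])) ⁻¹' Ω).indicator χ x ∂mHaar p := by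
        simp only [Finset.sum_mul, setIntegral_Zp_indicator_preimage_sub p χ hΩ hmeas]
    _ = ∫ x in Zp p, (∑ t ∈ T, Ω.indicator (fun _ => (1 : ℝ)) (x - (t : ℚ_[p]))) • χ x
          ∂mHaar p := by
        rw [← integral_finsetSum T fun t _ => hint t]
        simp only [Finset.sum_smul, hind]
    _ = ∫ x in Zp p, χ x ∂mHaar p :=
        integral_congr_ae (htile.mono fun x hx => by simp only [hx, one_smul])

theorem coeff_cyclotomic_prime_pow_mul {R : Type*} [CommRing R] {M : ℕ} {Q : R[X]}
    (hQ : Q.natDegree < p ^ M) {r s : ℕ} (hr : r < p ^ M) (hs : s < p) :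
    (cyclotomic (p ^ (M + 1)) R * Q).coeff (r + p ^ M * s) = Q.coeff r := by
  rw [cyclotomic_prime_pow_eq_geom_sum hp.out, Finset.sum_mul, finsetSum_coeff,
    Finset.sum_eq_single_of_mem s (Finset.mem_range.mpr hs)]
  · rw [← pow_mul, coeff_X_pow_mul', if_pos (by omega), Nat.add_sub_cancel]
  · intro i _ his
    rw [← pow_mul, coeff_X_pow_mul']
    split_ifs with hle
    · apply coeff_eq_zero_of_natDegree_lt
      obtain h | h := lt_or_gt_of_ne his <;>
        have := Nat.mul_le_mul_left (p ^ M) (Nat.succ_le_of_lt h) <;>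
        rw [Nat.mul_succ] at this <;> omega
    · rfl

theorem exists_eq_mod_add_pow_mul_of_sum_pow_eq_zero {K : Type*} [Field K] [CharZero K] {ζ : K}
    {M : ℕ} (hζ : IsPrimitiveRoot ζ (p ^ (M + 1))) {α : Type*} {T : Finset α} {b : α → ℕ}
    (hb : ∀ t ∈ T, b t < p ^ (M + 1)) (hsum : ∑ t ∈ T, ζ ^ b t = 0) {t₀ : α} (ht₀ : t₀ ∈ T)
    {s : ℕ} (hs : s < p) : ∃ t ∈ T, b t = b t₀ % p ^ M + p ^ M * s := by
  classical
  set P : ℚ[X] := ∑ t ∈ T, X ^ b t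
  have hcoeff : ∀ j, P.coeff j ≠ 0 ↔ ∃ t ∈ T, b t = j := fun j => by
    simp [P, finsetSum_coeff, coeff_X_pow, eq_comm (b := j)]
  obtain ⟨Q, hPQ⟩ : cyclotomic (p ^ (M + 1)) ℚ ∣ P := by
    rw [cyclotomic_eq_minpoly_rat hζ (pow_pos hp.out.pos _)]
    exact minpoly.dvd ℚ ζ (by simpa [P] using hsum)
  have hQ : Q.natDegree < p ^ M := by
    rcases eq_or_ne Q 0 with rfl | hQ0
    · simpa using pow_pos hp.out.pos M
    have hdegP : P.natDegree < p ^ (M + 1) := by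
      refine lt_of_le_of_lt (natDegree_sum_le_of_forall_le _ _ (n := p ^ (M + 1) - 1)
        fun t ht => ?_) (Nat.sub_lt (pow_pos hp.out.pos _) one_pos)
      rw [natDegree_X_pow]
      exact Nat.le_sub_one_of_lt (hb t ht)
    have hsplit : p ^ M * (p - 1) + p ^ M = p ^ (M + 1) := by
      rw [pow_succ, ← Nat.mul_succ, Nat.succ_eq_add_one, Nat.sub_add_cancel hp.out.one_lt.le]
    rw [hPQ, natDegree_mul (cyclotomic_ne_zero _ ℚ) hQ0, natDegree_cyclotomic,
      Nat.totient_prime_pow_succ hp.out] at hdegP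
    omega
  have hb₀ : b t₀ = b t₀ % p ^ M + p ^ M * (b t₀ / p ^ M) := (Nat.mod_add_div _ _).symm
  have hs₀ : b t₀ / p ^ M < p := Nat.div_lt_of_lt_mul (by rw [← pow_succ]; exact hb t₀ ht₀)
  have hr : b t₀ % p ^ M < p ^ M := Nat.mod_lt _ (pow_pos hp.out.pos M)
  refine (hcoeff _).mp ?_
  rw [hPQ, coeff_cyclotomic_prime_pow_mul p hQ hr hs, ← coeff_cyclotomic_prime_pow_mul p hQ hr hs₀,
    ← hPQ, ← hb₀]
  exact (hcoeff _).mpr ⟨t₀, ht₀, rfl⟩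

theorem exists_ne_pow_prime_eq_of_sum_eq_zero {α : Type*} {T : Finset α} (hT : T.Nonempty)
    {M : ℕ} {z : α → ℂ} (hz : ∀ t ∈ T, z t ^ p ^ M = 1) (hsum : ∑ t ∈ T, z t = 0) :
    ∃ t ∈ T, ∃ t' ∈ T, z t ≠ z t' ∧ z t ^ p = z t' ^ p := by
  obtain ⟨t₀, ht₀⟩ := hT
  cases M with
  | zero =>
    simp only [pow_zero, pow_one] at hz
    rw [Finset.sum_congr rfl hz, Finset.sum_const, nsmul_one, Nat.cast_eq_zero,
      Finset.card_eq_zero] at hsum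
    simp [hsum] at ht₀
  | succ M =>
    obtain ⟨ζ, hζ⟩ : ∃ ζ : ℂ, IsPrimitiveRoot ζ (p ^ (M + 1)) :=
      ⟨_, Complex.isPrimitiveRoot_exp _ (pow_ne_zero _ hp.out.ne_zero)⟩
    choose! b hb hbz using fun t ht => hζ.eq_pow_of_pow_eq_one (hz t ht)
    have hsum' : ∑ t ∈ T, ζ ^ b t = 0 := (Finset.sum_congr rfl hbz).trans hsum
    set s₀ := b t₀ / p ^ M
    have hb₀ : b t₀ = b t₀ % p ^ M + p ^ M * s₀ := (Nat.mod_add_div _ _).symm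
    obtain ⟨s', hs'p, hs's₀⟩ : ∃ s' < p, s' ≠ s₀ :=
      ⟨if s₀ = 0 then 1 else 0, by have := hp.out.two_le; split_ifs <;> omega,
        by split_ifs <;> omega⟩
    obtain ⟨t, ht, hbt⟩ := exists_eq_mod_add_pow_mul_of_sum_pow_eq_zero p hζ hb hsum' ht₀ hs'p
    have hpow : ∀ s, (ζ ^ (b t₀ % p ^ M + p ^ M * s)) ^ p = ζ ^ (b t₀ % p ^ M * p) := fun s => by
      rw [← pow_mul, show (b t₀ % p ^ M + p ^ M * s) * p = b t₀ % p ^ M * p + p ^ (M + 1) * s by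
        ring, pow_add, pow_mul _ (p ^ (M + 1)), hζ.pow_eq_one, one_pow, mul_one]
    refine ⟨t, ht, t₀, ht₀, fun h => hs's₀ ?_, ?_⟩
    · rw [← hbz t ht, ← hbz t₀ ht₀] at h
      have := hζ.pow_inj (hb t ht) (hb t₀ ht₀) h
      exact Nat.eq_of_mul_eq_mul_left (pow_pos hp.out.pos M) (by omega)
    · rw [← hbz t ht, ← hbz t₀ ht₀, hbt, hpow, ← hpow s₀, ← hb₀]

theorem valuation_sub_le_gammaT {T : Finset ℤ_[p]} (hT : 1 < T.card) {t t' : ℤ_[p]} (ht : t ∈ T)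
    (ht' : t' ∈ T) (hne : t ≠ t') : ((t - t' : ℤ_[p]) : ℚ_[p]).valuation ≤ gammaT p T hT := by
  classical
  unfold gammaT
  exact Finset.le_sup' (fun tt : ℤ_[p] × ℤ_[p] => ((tt.1 - tt.2 : ℤ_[p]) : ℚ_[p]).valuation)
    (Finset.mem_offDiag.mpr ⟨ht, ht', hne⟩ : (t, t') ∈ T.offDiag)

theorem gammaT_nonneg {T : Finset ℤ_[p]} (hT : 1 < T.card) : 0 ≤ gammaT p T hT := by
  obtain ⟨t, ht, t', ht', hne⟩ := Finset.one_lt_card.mp hT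
  exact PadicInt.valuation_coe_nonneg.trans (valuation_sub_le_gammaT p hT ht ht' hne)

theorem zpow_neg_gammaT_le_norm_sub {T : Finset ℤ_[p]} (hT : 1 < T.card) {t t' : ℤ_[p]}
    (ht : t ∈ T) (ht' : t' ∈ T) (hne : t ≠ t') :
    (p : ℝ) ^ (-gammaT p T hT) ≤ ‖(t : ℚ_[p]) - t'‖ := by
  rw [← PadicInt.coe_sub,
    Padic.norm_eq_zpow_neg_valuation (PadicInt.coe_ne_zero.mpr (sub_ne_zero.mpr hne))]
  exact zpow_le_zpow_right₀ (Nat.one_le_cast.mpr hp.out.one_lt.le)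
    (neg_le_neg (valuation_sub_le_gammaT p hT ht ht' hne))

theorem sum_padicCharInv_mul_ne_zero {T : Finset ℤ_[p]} (hT : 1 < T.card) {ξ : ℚ_[p]}
    (hξ : (p : ℝ) ^ (gammaT p T hT + 1) < ‖ξ‖) : ∑ t ∈ T, padicCharInv p (ξ * t) ≠ 0 := by
  intro hsum
  have hp0 : (0 : ℝ) < p := Nat.cast_pos.mpr hp.out.pos
  obtain ⟨M, hM⟩ := pow_unbounded_of_one_lt ‖ξ‖ (Nat.one_lt_cast.mpr hp.out.one_lt)
  have hroot : ∀ t ∈ T, padicCharInv p (ξ * t) ^ p ^ M = 1 := fun t _ => by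
    rw [← AddChar.map_nsmul_eq_pow, padicCharInv_eq_one_iff, mem_Zp, nsmul_eq_mul, norm_mul,
      norm_mul, Nat.cast_pow, Padic.norm_p_pow, zpow_neg, zpow_natCast,
      inv_mul_le_one₀ (by positivity)]
    exact (mul_le_of_le_one_right (norm_nonneg ξ) t.2).trans hM.le
  obtain ⟨t, ht, t', ht', hne, hpow⟩ :=
    exists_ne_pow_prime_eq_of_sum_eq_zero p (Finset.card_pos.mp (by omega)) hroot hsum
  have hmem : (p : ℚ_[p]) * (ξ * (t - t')) ∈ Zp p := by
    rw [← padicCharInv_eq_one_iff, ← nsmul_eq_mul, AddChar.map_nsmul_eq_pow, mul_sub,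
      AddChar.map_sub_eq_div, div_pow, hpow,
      div_self (pow_ne_zero _ (AddChar.val_isUnit _ _).ne_zero)]
  have hγ := zpow_neg_gammaT_le_norm_sub p hT ht ht' (fun h => hne (h ▸ rfl))
  rw [mem_Zp, norm_mul, Padic.norm_p, inv_mul_le_one₀ hp0, norm_mul] at hmem
  rw [zpow_neg, inv_le_iff_one_le_mul₀ (zpow_pos hp0 _)] at hγ
  rw [zpow_add_one₀ hp0.ne'] at hξ
  nlinarith [norm_nonneg ξ, norm_nonneg ((t : ℚ_[p]) - t'), zpow_pos hp0 (gammaT p T hT)]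

theorem fourier_indicator_vanishes_high_frequency (Ω : Set ℚ_[p]) (hΩ : Ω ⊆ Zp p)
    (hmeas : MeasurableSet Ω)
    (T : Finset ℤ_[p]) (hT : 1 < T.card)
    (htile : ∀ᵐ x ∂ (mHaar p).restrict (Zp p),
      ∑ t ∈ T, Ω.indicator (fun _ => (1 : ℝ)) (x - (t : ℚ_[p])) = 1)
    (ξ : ℚ_[p]) (hξ : (p : ℝ) ^ (gammaT p T hT + 1) < ‖ξ‖) :
    (∫ x in Ω, Complex.exp (-(2 * Real.pi * Complex.I
        * (padicFract p (ξ * x) : ℂ))) ∂ mHaar p) = 0 := by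
  set χ := (padicCharInv p).mulShift ξ
  have hξZp : χ 1 ≠ 1 := by
    rw [AddChar.mulShift_apply, mul_one, Ne, padicCharInv_eq_one_iff, mem_Zp, not_le]
    exact lt_of_le_of_lt (one_le_zpow₀ (Nat.one_le_cast.mpr hp.out.one_lt.le)
      (by linarith [gammaT_nonneg p hT])) hξ
  have key := sum_mul_setIntegral_eq_setIntegral_Zp p χ
    ((continuous_padicCharInv p).comp (continuous_const_mul ξ)) hΩ hmeas htile
  rw [setIntegral_Zp_addChar_eq_zero p χ (PadicInt.subring p).one_mem hξZp] at key
  exact (mul_eq_zero.mp key).resolve_left (sum_padicCharInv_mul_ne_zero p hT hξ)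

end PadicTiling
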